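/- arXiv:quant-ph/9703004 — 3 statements merged into one kernel-verified Lean document; each statement's English description precedes it below -/
import Mathlib

section
/- Let ρ be a separable state on ℂ^{m₁} ⊗ ℂ^{m₂} with m = m₁m₂. Then there exist N ≤ m² product unit vectors ψ_i ⊗ φ_k and probabilities p_{ik} such that simultaneously ρ = Σ p_{ik} |ψ_i ⊗ φ_k⟩⟨ψ_i ⊗ φ_k| and ρ^{T₂} = Σ p_{ik} |ψ_i ⊗ φ_k*⟩⟨ψ_i ⊗ φ_k*|, where φ* denotes the componentwise complex conjugate of φ in the standard basis. -/
open scoped ComplexOrder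
open Matrix Kronecker

noncomputable section

/-- A quantum state: a positive semidefinite complex matrix of trace 1. -/
def IsState {n : Type*} [Fintype n] [DecidableEq n] (ρ : Matrix n n ℂ) : Prop :=
  ρ.PosSemidef ∧ ρ.trace = 1

/-- Separability: membership in the closure of the convex hull of Kronecker
products of states. -/
def IsSepState {m₁ m₂ : ℕ}
    (ρ : Matrix (Fin m₁ × Fin m₂) (Fin m₁ × Fin m₂) ℂ) : Prop :=
  ρ ∈ closure (convexHull ℝ
    {σ : Matrix (Fin m₁ × Fin m₂) (Fin m₁ × Fin m₂) ℂ |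
      ∃ (A : Matrix (Fin m₁) (Fin m₁) ℂ) (B : Matrix (Fin m₂) (Fin m₂) ℂ),
        IsState A ∧ IsState B ∧ σ = A ⊗ₖ B})

/-- The rank-one operator `|ψ⟩⟨ψ|` (orthogonal projection on `span ψ` for unit `ψ`). -/
def proj {n : Type*} (ψ : n → ℂ) : Matrix n n ℂ :=
  fun i j => ψ i * star (ψ j)

/-- The tensor (Kronecker) product of two vectors. -/
def tens {m₁ m₂ : ℕ} (ψ : Fin m₁ → ℂ) (φ : Fin m₂ → ℂ) :
    Fin m₁ × Fin m₂ → ℂ := fun p => ψ p.1 * φ p.2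

/-- Partial transposition on the second factor. -/
def pt₂ {m₁ m₂ : ℕ} (ρ : Matrix (Fin m₁ × Fin m₂) (Fin m₁ × Fin m₂) ℂ) :
    Matrix (Fin m₁ × Fin m₂) (Fin m₁ × Fin m₂) ℂ :=
  fun p q => ρ (p.1, q.2) (q.1, p.2)

/-!
A separable state is a mixture of pure product states `|ψ ⊗ φ⟩⟨ψ ⊗ φ|`: a product state `A ⊗ B`
is one by the spectral decompositions of `A` and `B`, and the closure in the definition of
separability adds nothing, because the convex hull of the compact set of pure product states is
compact in finite dimension. These all lie in the real affine space of Hermitian trace-one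
matrices, of dimension `m² - 1`, so Carathéodory's theorem needs at most `m²` of them. Partial
transposition is linear and sends `|ψ ⊗ φ⟩⟨ψ ⊗ φ|` to `|ψ ⊗ φ*⟩⟨ψ ⊗ φ*|`, so the same ensemble
realises `ρ^{T₂}`.
-/

open Set Module

section ConvexHull

variable {E : Type*} [AddCommGroup E] [Module ℝ E]

lemma exists_fin_affineIndependent_of_mem_convexHull {s : Set E} {x : E}
    (hx : x ∈ convexHull ℝ s) :
    ∃ (N : ℕ) (z : Fin N → E) (w : Fin N → ℝ), AffineIndependent ℝ z ∧ (∀ i, z i ∈ s) ∧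
      (∀ i, 0 ≤ w i) ∧ ∑ i, w i = 1 ∧ ∑ i, w i • z i = x := by
  obtain ⟨ι, _, z, w, hzs, hz, hw0, hw1, rfl⟩ := eq_pos_convex_span_of_mem_convexHull hx
  let e := (Fintype.equivFin ι).symm
  exact ⟨_, z ∘ e, w ∘ e, hz.comp_embedding e.toEmbedding, fun i => hzs ⟨_, rfl⟩,
    fun i => (hw0 _).le, by rwa [← e.sum_comp] at hw1, e.sum_comp fun i => w i • z i⟩

def convexCombinations (s : Set E) (k : ℕ) : Set E :=
  (fun x : (Fin k → ℝ) × (Fin k → E) => ∑ i, x.1 i • x.2 i) ''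
    (stdSimplex ℝ (Fin k) ×ˢ univ.pi fun _ => s)

lemma convexCombinations_subset_convexHull (s : Set E) (k : ℕ) :
    convexCombinations s k ⊆ convexHull ℝ s := by
  rintro _ ⟨⟨w, z⟩, ⟨⟨hw0, hw1⟩, hz⟩, rfl⟩
  exact (convex_convexHull ℝ s).sum_mem (fun i _ => hw0 i) hw1
    fun i _ => subset_convexHull ℝ s (hz i trivial)

variable [TopologicalSpace E] [ContinuousAdd E] [ContinuousSMul ℝ E]

lemma isCompact_convexCombinations {s : Set E} (hs : IsCompact s) (k : ℕ) :
    IsCompact (convexCombinations s k) :=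
  ((isCompact_stdSimplex ℝ _).prod (isCompact_univ_pi fun _ => hs)).image (by fun_prop)

lemma IsCompact.isCompact_convexHull [FiniteDimensional ℝ E] {s : Set E} (hs : IsCompact s) :
    IsCompact (convexHull ℝ s) := by
  suffices convexHull ℝ s = ⋃ k ∈ Finset.range (finrank ℝ E + 2), convexCombinations s k by
    rw [this]
    exact (Finset.range _).isCompact_biUnion fun k _ => isCompact_convexCombinations hs k
  refine Subset.antisymm (fun x hx => ?_)
    (iUnion₂_subset fun k _ => convexCombinations_subset_convexHull s k)
  obtain ⟨N, z, w, hz, hzs, hw0, hw1, rfl⟩ := exists_fin_affineIndependent_of_mem_convexHull hx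
  have hN : N ≤ finrank ℝ E + 1 := by
    simpa using hz.card_le_finrank_succ.trans (Nat.add_le_add_right (Submodule.finrank_le _) 1)
  exact mem_iUnion₂.2
    ⟨N, Finset.mem_range.2 (by omega), ⟨(w, z), ⟨⟨hw0, hw1⟩, fun i _ => hzs i⟩, rfl⟩⟩

end ConvexHull

lemma LinearMap.mem_convexHull_image2 {𝕜 E F G : Type*} [CommSemiring 𝕜] [PartialOrder 𝕜]
    [AddCommMonoid E] [AddCommMonoid F] [AddCommMonoid G] [Module 𝕜 E] [Module 𝕜 F] [Module 𝕜 G]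
    (f : E →ₗ[𝕜] F →ₗ[𝕜] G) {s : Set E} {t : Set F} {x : E} {y : F}
    (hx : x ∈ convexHull 𝕜 s) (hy : y ∈ convexHull 𝕜 t) :
    f x y ∈ convexHull 𝕜 (image2 (fun a b => f a b) s t) := by
  have hxt : ∀ b ∈ t, f x b ∈ convexHull 𝕜 (image2 (fun a b => f a b) s t) := fun b hb => by
    have := mem_image_of_mem (f.flip b) hx
    rw [(f.flip b).image_convexHull] at this
    exact convexHull_mono (by rintro _ ⟨a, ha, rfl⟩; exact mem_image2_of_mem ha hb) this
  have := mem_image_of_mem (f x) hy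
  rw [(f x).image_convexHull] at this
  exact convexHull_min (by rintro _ ⟨b, hb, rfl⟩; exact hxt b hb) (convex_convexHull 𝕜 _) this

lemma AffineIndependent.linearIndependent_of_forall_eq_one {k V ι : Type*} [Ring k]
    [AddCommGroup V] [Module k V] {p : ι → V} (hp : AffineIndependent k p) (f : V →ₗ[k] k)
    (hf : ∀ i, f (p i) = 1) : LinearIndependent k p := by
  rw [linearIndependent_iff']
  intro s g hg
  have hsum : ∑ i ∈ s, g i = 0 := by simpa [hf] using congr(f $hg)
  refine hp s g hsum ?_
  rw [s.weightedVSub_eq_weightedVSubOfPoint_of_sum_eq_zero g p hsum 0,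
    Finset.weightedVSubOfPoint_apply]
  simpa using hg

section States

variable {n : Type*} [Fintype n]

lemma finrank_selfAdjoint_matrix_le :
    finrank ℝ (selfAdjoint.submodule ℝ (Matrix n n ℂ)) ≤ Fintype.card n ^ 2 := by
  -- `re + im` of the entries determines a Hermitian matrix: transposing flips the sign of `im`.
  let Φ : Matrix n n ℂ →ₗ[ℝ] Matrix n n ℝ := (Complex.reLm + Complex.imLm).mapMatrix
  have hΦ : Function.Injective (Φ ∘ₗ (selfAdjoint.submodule ℝ (Matrix n n ℂ)).subtype) := by
    rw [← LinearMap.ker_eq_bot, LinearMap.ker_eq_bot']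
    rintro ⟨M, hM⟩ h
    ext i j
    have hji : M j i = star (M i j) := congr_fun₂ hM.symm j i
    have hre := congr_fun₂ h i j
    have him := congr_fun₂ h j i
    simp only [Φ, LinearMap.comp_apply, Submodule.subtype_apply, LinearMap.mapMatrix_apply,
      Matrix.map_apply, LinearMap.add_apply, Complex.reLm_coe, Complex.imLm_coe, Matrix.zero_apply,
      hji, Complex.star_def, Complex.conj_re, Complex.conj_im] at hre him
    apply Complex.ext <;> simp only [ZeroMemClass.coe_zero, Matrix.zero_apply, Complex.zero_re,
      Complex.zero_im] <;> linarith
  simpa [sq, Module.finrank_matrix] using LinearMap.finrank_le_finrank_of_injective hΦ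

lemma AffineIndependent.card_le_sq_of_isHermitian {ι : Type*} [Fintype ι]
    {z : ι → Matrix n n ℂ} (hz : AffineIndependent ℝ z) (hherm : ∀ i, (z i).IsHermitian)
    (htr : ∀ i, (z i).trace = 1) : Fintype.card ι ≤ Fintype.card n ^ 2 := by
  have hli := hz.linearIndependent_of_forall_eq_one
    (Complex.reLm ∘ₗ Matrix.traceLinearMap n ℝ ℂ) (by simp [htr])
  rw [← finrank_span_eq_card hli]
  refine (Submodule.finrank_mono ?_).trans finrank_selfAdjoint_matrix_le
  rw [Submodule.span_le]
  rintro _ ⟨i, rfl⟩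
  exact hherm i

def unitVectors (n : Type*) [Fintype n] : Set (n → ℂ) := {v | ∑ i, ‖v i‖ ^ 2 = 1}

lemma isCompact_unitVectors : IsCompact (unitVectors n) := by
  refine Metric.isCompact_of_isClosed_isBounded (isClosed_eq (by fun_prop) continuous_const)
    ((Metric.isBounded_closedBall (x := 0) (r := 1)).subset fun v hv => ?_)
  rw [Metric.mem_closedBall, dist_zero_right, pi_norm_le_iff_of_nonneg zero_le_one]
  intro i
  have : ‖v i‖ ^ 2 ≤ 1 := hv ▸ Finset.single_le_sum (fun j _ => sq_nonneg ‖v j‖) (Finset.mem_univ i)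
  exact (pow_le_one_iff_of_nonneg (norm_nonneg _) two_ne_zero).mp this

lemma trace_proj (v : n → ℂ) : (proj v).trace = ((∑ i, ‖v i‖ ^ 2 : ℝ) : ℂ) := by
  simp [Matrix.trace, proj, Complex.mul_conj, Complex.normSq_eq_norm_sq]

variable [DecidableEq n]

lemma isState_proj {v : n → ℂ} (hv : v ∈ unitVectors n) : IsState (proj v) :=
  ⟨posSemidef_vecMulVec_self_star v, by rw [trace_proj, hv, Complex.ofReal_one]⟩

lemma IsState.kronecker {m : Type*} [Fintype m] [DecidableEq m] {A : Matrix n n ℂ}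
    {B : Matrix m m ℂ} (hA : IsState A) (hB : IsState B) : IsState (A ⊗ₖ B) :=
  ⟨hA.1.kronecker hB.1, by rw [trace_kronecker, hA.2, hB.2, one_mul]⟩

lemma Matrix.IsHermitian.eq_sum_eigenvalues_smul_proj {A : Matrix n n ℂ} (hA : A.IsHermitian) :
    A = ∑ j, (hA.eigenvalues j : ℂ) • proj ⇑(hA.eigenvectorBasis j) := by
  conv_lhs => rw [hA.spectral_theorem, Unitary.conjStarAlgAut_apply]
  ext i k
  simp only [Matrix.mul_apply, Matrix.diagonal_apply, mul_ite, mul_zero, Finset.sum_ite_eq',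
    Finset.mem_univ, if_true, Matrix.sum_apply, Matrix.smul_apply, Matrix.star_apply, proj,
    hA.eigenvectorUnitary_apply, Function.comp_apply, RCLike.ofReal_eq_complex_ofReal, smul_eq_mul]
  exact Finset.sum_congr rfl fun j _ => by ring

lemma eigenvectorBasis_mem_unitVectors {A : Matrix n n ℂ} (hA : A.IsHermitian) (j : n) :
    ⇑(hA.eigenvectorBasis j) ∈ unitVectors n := by
  change ∑ i, _ = 1
  rw [← EuclideanSpace.norm_sq_eq, hA.eigenvectorBasis.norm_eq_one, one_pow]

lemma IsState.mem_convexHull_proj {A : Matrix n n ℂ} (hA : IsState A) :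
    A ∈ convexHull ℝ (proj '' unitVectors n) := by
  have hsum : ∑ j, hA.1.1.eigenvalues j = 1 :=
    Complex.ofReal_injective (by simpa using hA.1.1.trace_eq_sum_eigenvalues.symm.trans hA.2)
  rw [hA.1.1.eq_sum_eigenvalues_smul_proj]
  simp_rw [Complex.coe_smul]
  exact (convex_convexHull ℝ _).sum_mem (fun j _ => hA.1.eigenvalues_nonneg j) hsum
    fun j _ => subset_convexHull ℝ _ ⟨_, eigenvectorBasis_mem_unitVectors hA.1.1 j, rfl⟩

end States

section Bipartite

variable {m₁ m₂ : ℕ}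

def pureProductStates (m₁ m₂ : ℕ) : Set (Matrix (Fin m₁ × Fin m₂) (Fin m₁ × Fin m₂) ℂ) :=
  image2 (fun ψ φ => proj (tens ψ φ)) (unitVectors (Fin m₁)) (unitVectors (Fin m₂))

lemma proj_tens (ψ : Fin m₁ → ℂ) (φ : Fin m₂ → ℂ) : proj (tens ψ φ) = proj ψ ⊗ₖ proj φ := by
  ext p q
  simp only [proj, tens, kroneckerMap_apply, star_mul']
  ring

lemma pureProductStates_eq_image2_kronecker :
    pureProductStates m₁ m₂ =
      image2 (· ⊗ₖ ·) (proj '' unitVectors (Fin m₁)) (proj '' unitVectors (Fin m₂)) := by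
  simp only [pureProductStates, image2_image_left, image2_image_right, proj_tens]

lemma isState_of_mem_pureProductStates {σ : Matrix (Fin m₁ × Fin m₂) (Fin m₁ × Fin m₂) ℂ}
    (hσ : σ ∈ pureProductStates m₁ m₂) : IsState σ := by
  obtain ⟨ψ, hψ, φ, hφ, rfl⟩ := hσ
  dsimp only
  rw [proj_tens]
  exact (isState_proj hψ).kronecker (isState_proj hφ)

lemma isCompact_pureProductStates : IsCompact (pureProductStates m₁ m₂) := by
  rw [pureProductStates, ← image_prod]
  exact (isCompact_unitVectors.prod isCompact_unitVectors).image (by unfold proj tens; fun_prop)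

lemma IsState.kronecker_mem_convexHull_pureProductStates {A : Matrix (Fin m₁) (Fin m₁) ℂ}
    {B : Matrix (Fin m₂) (Fin m₂) ℂ} (hA : IsState A) (hB : IsState B) :
    A ⊗ₖ B ∈ convexHull ℝ (pureProductStates m₁ m₂) := by
  rw [pureProductStates_eq_image2_kronecker]
  exact (kroneckerBilinear (R := ℝ) (α := ℂ)).mem_convexHull_image2
    hA.mem_convexHull_proj hB.mem_convexHull_proj

lemma IsSepState.mem_convexHull_pureProductStates
    {ρ : Matrix (Fin m₁ × Fin m₂) (Fin m₁ × Fin m₂) ℂ} (hρ : IsSepState ρ) :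
    ρ ∈ convexHull ℝ (pureProductStates m₁ m₂) := by
  refine closure_minimal (convexHull_min ?_ (convex_convexHull ℝ _))
    isCompact_pureProductStates.isCompact_convexHull.isClosed hρ
  rintro _ ⟨A, B, hA, hB, rfl⟩
  exact hA.kronecker_mem_convexHull_pureProductStates hB

lemma pt₂_sum_smul {ι : Type*} [Fintype ι] (c : ι → ℂ)
    (M : ι → Matrix (Fin m₁ × Fin m₂) (Fin m₁ × Fin m₂) ℂ) :
    pt₂ (∑ i, c i • M i) = ∑ i, c i • pt₂ (M i) := by
  ext p q
  simp only [pt₂, Matrix.sum_apply, Matrix.smul_apply]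

lemma pt₂_proj_tens (ψ : Fin m₁ → ℂ) (φ : Fin m₂ → ℂ) :
    pt₂ (proj (tens ψ φ)) = proj (tens ψ fun j => star (φ j)) := by
  ext p q
  simp only [pt₂, proj, tens, star_mul', star_star]
  ring

end Bipartite

theorem separable_ensemble_and_partial_transpose_general {m₁ m₂ : ℕ}
    (ρ : Matrix (Fin m₁ × Fin m₂) (Fin m₁ × Fin m₂) ℂ)
    (hsep : IsSepState ρ) :
    ∃ N : ℕ, N ≤ (m₁ * m₂) ^ 2 ∧
      ∃ (ψ : Fin N → Fin m₁ → ℂ) (φ : Fin N → Fin m₂ → ℂ) (p : Fin N → ℝ),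
        (∀ i, ∑ j, ‖ψ i j‖ ^ 2 = 1) ∧
        (∀ i, ∑ j, ‖φ i j‖ ^ 2 = 1) ∧
        (∀ i, 0 ≤ p i) ∧ (∑ i, p i) = 1 ∧
        ρ = ∑ i, (p i : ℂ) • proj (tens (ψ i) (φ i)) ∧
        pt₂ ρ = ∑ i, (p i : ℂ) • proj (tens (ψ i) (fun j => star (φ i j))) := by
  obtain ⟨N, z, p, hz, hzP, hp0, hp1, rfl⟩ :=
    exists_fin_affineIndependent_of_mem_convexHull hsep.mem_convexHull_pureProductStates
  have hN : N ≤ (m₁ * m₂) ^ 2 := by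
    simpa using hz.card_le_sq_of_isHermitian
      (fun i => (isState_of_mem_pureProductStates (hzP i)).1.1)
      (fun i => (isState_of_mem_pureProductStates (hzP i)).2)
  choose ψ hψ φ hφ hz_eq using hzP
  refine ⟨N, hN, ψ, φ, p, hψ, hφ, hp0, hp1, ?_, ?_⟩
  · simp_rw [hz_eq, Complex.coe_smul]
  · simp_rw [← Complex.coe_smul, pt₂_sum_smul, ← hz_eq, pt₂_proj_tens]

/-- For a separable state `ρ` there is a single ensemble of at
most `m²` product unit vectors `ψ_i ⊗ φ_i` with probabilities `p_i` realizing
simultaneously `ρ` and (after componentwise conjugation of the second factors)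
its partial transposition `ρ^{T₂}`. -/
theorem separable_ensemble_and_partial_transpose {m₁ m₂ : ℕ}
    (ρ : Matrix (Fin m₁ × Fin m₂) (Fin m₁ × Fin m₂) ℂ)
    (hρ : IsState ρ) (hsep : IsSepState ρ) :
    ∃ N : ℕ, N ≤ (m₁ * m₂) ^ 2 ∧
      ∃ (ψ : Fin N → Fin m₁ → ℂ) (φ : Fin N → Fin m₂ → ℂ) (p : Fin N → ℝ),
        (∀ i, ∑ j, ‖ψ i j‖ ^ 2 = 1) ∧
        (∀ i, ∑ j, ‖φ i j‖ ^ 2 = 1) ∧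
        (∀ i, 0 ≤ p i) ∧ (∑ i, p i) = 1 ∧
        ρ = ∑ i, (p i : ℂ) • proj (tens (ψ i) (φ i)) ∧
        pt₂ ρ = ∑ i, (p i : ℂ) • proj (tens (ψ i) (fun j => star (φ i j))) :=
  separable_ensemble_and_partial_transpose_general ρ hsep
end
end

section
/- Let ρ be a separable state on ℂ^{m₁} ⊗ ℂ^{m₂}. Then there exists a finite set of product vectors ψ_i ⊗ φ_k such that the vectors ψ_i ⊗ φ_k span the range of ρ and the partially conjugated vectors ψ_i ⊗ φ_k* span the range of ρ^{T₂}; in particular each ψ_i ⊗ φ_k belongs to the range of ρ and each ψ_i ⊗ φ_k* belongs to the range of ρ^{T₂}. (Range criterion for separability.) -/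
/-!
A state is a convex combination of the projections `|v⟩⟨v|` onto its eigenvectors, so a
Kronecker product of states is a convex combination of projections onto product vectors
`ψ ⊗ φ` with bounded entries. These form a compact set, whose convex hull is compact by
Carathéodory's theorem; hence the closure in the definition of separability adds nothing and
`ρ = ∑ᵢ |ψᵢ ⊗ φᵢ⟩⟨ψᵢ ⊗ φᵢ|`. Partial transposition turns this into
`ρ^{T₂} = ∑ᵢ |ψᵢ ⊗ φᵢ*⟩⟨ψᵢ ⊗ φᵢ*|`, and the range of `∑ₖ |yₖ⟩⟨yₖ| = M Mᴴ`, where `M` has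
columns `yₖ`, is the range of `M`, i.e. the span of the `yₖ`.
-/

open scoped ComplexOrder
open Matrix Kronecker

noncomputable section

section RankOne

variable {n ι : Type*} [Fintype ι]

theorem range_mulVecLin_mul_conjTranspose [Fintype n] {R : Type*} [Field R] [PartialOrder R]
    [StarRing R] [StarOrderedRing R] (M : Matrix n ι R) :
    LinearMap.range (M * Mᴴ).mulVecLin = LinearMap.range M.mulVecLin := by
  refine Submodule.eq_of_le_of_finrank_le ?_ (rank_self_mul_conjTranspose M).ge
  rw [mulVecLin_mul]
  exact LinearMap.range_comp_le_range _ _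

theorem mul_conjTranspose_eq_sum_proj (M : Matrix n ι ℂ) :
    M * Mᴴ = ∑ k, proj (M.col k) := by
  ext i j
  simp [Matrix.sum_apply, proj, mul_apply]

theorem range_mulVecLin_sum_proj [Fintype n] (v : ι → n → ℂ) :
    LinearMap.range (∑ k, proj (v k)).mulVecLin = Submodule.span ℂ (Set.range v) := by
  let M : Matrix n ι ℂ := (of v)ᵀ
  calc LinearMap.range (∑ k, proj (v k)).mulVecLin = LinearMap.range (M * Mᴴ).mulVecLin := by
        rw [mul_conjTranspose_eq_sum_proj]; rfl
    _ = Submodule.span ℂ (Set.range v) := by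
        rw [range_mulVecLin_mul_conjTranspose, range_mulVecLin]; rfl

theorem Matrix.IsHermitian.eq_sum_smul_proj [Fintype n] [DecidableEq n] {A : Matrix n n ℂ}
    (hA : A.IsHermitian) :
    A = ∑ k, hA.eigenvalues k • proj ((hA.eigenvectorUnitary : Matrix n n ℂ).col k) := by
  ext i j
  conv_lhs => rw [hA.spectral_theorem, Unitary.conjStarAlgAut_apply, mul_apply]
  simp only [Matrix.sum_apply, mul_diagonal, star_apply, Matrix.smul_apply, proj, col_apply,
    Function.comp_apply, RCLike.ofReal_eq_complex_ofReal, Complex.real_smul]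
  refine Finset.sum_congr rfl fun k _ => ?_
  ring

end RankOne

section Caratheodory

variable {E : Type*} [AddCommGroup E] [Module ℝ E]

theorem convexHull_eq_image_stdSimplex [FiniteDimensional ℝ E] {s : Set E} (hs : s.Nonempty) :
    convexHull ℝ s =
      (fun p : (Fin (Module.finrank ℝ E + 1) → ℝ) × (Fin (Module.finrank ℝ E + 1) → E) =>
        ∑ j, p.1 j • p.2 j) '' (stdSimplex ℝ _ ×ˢ Set.univ.pi fun _ => s) := by
  classical
  obtain ⟨x₀, hx₀⟩ := hs
  refine Set.Subset.antisymm (fun x hx => ?_) ?_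
  · obtain ⟨ι, _, z, w, hzs, hai, hw0, hw1, rfl⟩ := eq_pos_convex_span_of_mem_convexHull hx
    obtain ⟨e⟩ : Nonempty (ι ↪ Fin (Module.finrank ℝ E + 1)) :=
      Function.Embedding.nonempty_of_card_le <| by
        simpa using
          hai.card_le_finrank_succ.trans (Nat.add_le_add_right (Submodule.finrank_le _) 1)
    let w' := Function.extend e w 0
    let z' := Function.extend e z fun _ => x₀
    have hw' : ∀ i, w' (e i) = w i := e.injective.extend_apply _ _
    have hz' : ∀ i, z' (e i) = z i := e.injective.extend_apply _ _
    have hout : ∀ j ∉ Set.range e, w' j = 0 ∧ z' j = x₀ := fun j hj =>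
      ⟨Function.extend_apply' _ _ _ hj, Function.extend_apply' _ _ _ hj⟩
    refine ⟨(w', z'), ⟨⟨fun j => ?_, ?_⟩, fun j _ => ?_⟩, ?_⟩
    · by_cases hj : j ∈ Set.range e
      · obtain ⟨i, rfl⟩ := hj
        simpa only [hw'] using (hw0 i).le
      · exact (hout j hj).1.symm.le
    · rw [← hw1]
      exact (Fintype.sum_of_injective e e.injective _ _ (fun j hj => (hout j hj).1)
        fun i => (hw' i).symm).symm
    · by_cases hj : j ∈ Set.range e
      · obtain ⟨i, rfl⟩ := hj
        simpa only [hz'] using hzs (Set.mem_range_self i)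
      · simpa only [(hout j hj).2] using hx₀
    · exact (Fintype.sum_of_injective e e.injective _ _
        (fun j hj => by simp [(hout j hj).1]) fun i => by simp [hw', hz']).symm
  · rintro _ ⟨⟨w, z⟩, ⟨⟨hw0, hw1⟩, hz⟩, rfl⟩
    exact (convex_convexHull ℝ s).sum_mem (fun j _ => hw0 j) hw1
      fun j _ => subset_convexHull ℝ s (hz j (Set.mem_univ j))

theorem IsCompact.convexHull [TopologicalSpace E] [ContinuousAdd E] [ContinuousSMul ℝ E]
    [FiniteDimensional ℝ E] {s : Set E} (hs : IsCompact s) : IsCompact (convexHull ℝ s) := by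
  rcases s.eq_empty_or_nonempty with rfl | hne
  · simp
  rw [convexHull_eq_image_stdSimplex hne]
  exact ((isCompact_stdSimplex ℝ _).prod (isCompact_univ_pi fun _ => hs)).image (by fun_prop)

end Caratheodory

theorem IsState.exists_eq_sum_smul_proj {n : Type*} [Fintype n] [DecidableEq n]
    {A : Matrix n n ℂ} (hA : IsState A) :
    ∃ (p : n → ℝ) (v : n → n → ℂ), (∀ k, 0 ≤ p k) ∧ ∑ k, p k = 1 ∧ (∀ k, ‖v k‖ ≤ 1) ∧
      A = ∑ k, p k • proj (v k) := by
  obtain ⟨hpos, htr⟩ := hA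
  have hH := hpos.isHermitian
  refine ⟨hH.eigenvalues, (hH.eigenvectorUnitary : Matrix n n ℂ).col,
    hpos.eigenvalues_nonneg, ?_, fun k => ?_, hH.eq_sum_smul_proj⟩
  · rw [hH.trace_eq_sum_eigenvalues] at htr
    simpa only [RCLike.ofReal_eq_complex_ofReal, ← Complex.ofReal_sum, Complex.ofReal_eq_one]
      using htr
  · exact (pi_norm_le_iff_of_nonneg zero_le_one).2 fun i =>
      entry_norm_bound_of_unitary hH.eigenvectorUnitary.2 i k

section ProductVectors

variable {m₁ m₂ : ℕ}

theorem proj_kronecker_proj (ψ : Fin m₁ → ℂ) (φ : Fin m₂ → ℂ) :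
    proj ψ ⊗ₖ proj φ = proj (tens ψ φ) := by
  ext p q
  simp only [kroneckerMap_apply, proj, tens, star_mul']
  ring

theorem pt₂_sum_proj_tens {ι : Type*} [Fintype ι] (ψ : ι → Fin m₁ → ℂ) (φ : ι → Fin m₂ → ℂ) :
    pt₂ (∑ i, proj (tens (ψ i) (φ i))) = ∑ i, proj (tens (ψ i) fun j => star (φ i j)) := by
  ext p q
  simp only [pt₂, Matrix.sum_apply, proj, tens, star_mul', star_star]
  exact Finset.sum_congr rfl fun i _ => by ring

theorem smul_proj_tens {c : ℝ} (hc : 0 ≤ c) (ψ : Fin m₁ → ℂ) (φ : Fin m₂ → ℂ) :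
    c • proj (tens ψ φ) = proj (tens ((√c : ℂ) • ψ) φ) := by
  have hsq : (√c : ℂ) * star (√c : ℂ) = c := by
    rw [Complex.star_def, Complex.conj_ofReal, ← Complex.ofReal_mul, Real.mul_self_sqrt hc]
  ext p q
  simp only [Matrix.smul_apply, proj, tens, Pi.smul_apply, smul_eq_mul, star_mul',
    Complex.real_smul, ← hsq]
  ring

/-- `Fin m → ℂ` carries the sup norm; any bound would do, only compactness matters. -/
def boundedProductProjs (m₁ m₂ : ℕ) : Set (Matrix (Fin m₁ × Fin m₂) (Fin m₁ × Fin m₂) ℂ) :=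
  (fun v : (Fin m₁ → ℂ) × (Fin m₂ → ℂ) => proj (tens v.1 v.2)) ''
    (Metric.closedBall 0 1 ×ˢ Metric.closedBall 0 1)

theorem isCompact_boundedProductProjs : IsCompact (boundedProductProjs m₁ m₂) :=
  ((isCompact_closedBall 0 1).prod (isCompact_closedBall 0 1)).image <| by
    unfold proj tens
    fun_prop

theorem IsState.kronecker_mem_convexHull {A : Matrix (Fin m₁) (Fin m₁) ℂ}
    {B : Matrix (Fin m₂) (Fin m₂) ℂ} (hA : IsState A) (hB : IsState B) :
    A ⊗ₖ B ∈ convexHull ℝ (boundedProductProjs m₁ m₂) := by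
  obtain ⟨p, u, hp0, hp1, hu, rfl⟩ := hA.exists_eq_sum_smul_proj
  obtain ⟨q, v, hq0, hq1, hv, rfl⟩ := hB.exists_eq_sum_smul_proj
  have hsum : (∑ k, p k • proj (u k)) ⊗ₖ (∑ l, q l • proj (v l)) =
      ∑ kl : Fin m₁ × Fin m₂, (p kl.1 * q kl.2) • proj (tens (u kl.1) (v kl.2)) := by
    ext r s
    simp only [kroneckerMap_apply, Matrix.sum_apply, Matrix.smul_apply, Fintype.sum_mul_sum,
      Fintype.sum_prod_type, ← proj_kronecker_proj, Complex.real_smul]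
    push_cast
    exact Finset.sum_congr rfl fun k _ => Finset.sum_congr rfl fun l _ => by ring
  rw [hsum]
  refine (convex_convexHull ℝ _).sum_mem (fun kl _ => mul_nonneg (hp0 _) (hq0 _)) ?_
    fun kl _ => subset_convexHull ℝ _ ⟨(u kl.1, v kl.2), ⟨?_, ?_⟩, rfl⟩
  · rw [Fintype.sum_prod_type, ← Fintype.sum_mul_sum, hp1, hq1, one_mul]
  · simpa using hu kl.1
  · simpa using hv kl.2

end ProductVectors

section SumProjTens

variable {m₁ m₂ : ℕ}

def IsSumProjTens (ρ : Matrix (Fin m₁ × Fin m₂) (Fin m₁ × Fin m₂) ℂ) : Prop :=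
  ∃ (N : ℕ) (ψ : Fin N → Fin m₁ → ℂ) (φ : Fin N → Fin m₂ → ℂ),
    ρ = ∑ i, proj (tens (ψ i) (φ i))

theorem convex_isSumProjTens :
    Convex ℝ {ρ : Matrix (Fin m₁ × Fin m₂) (Fin m₁ × Fin m₂) ℂ | IsSumProjTens ρ} := by
  rintro _ ⟨N, ψ, φ, rfl⟩ _ ⟨M, ψ', φ', rfl⟩ a b ha hb -
  refine ⟨N + M, Fin.append (fun i => (√a : ℂ) • ψ i) fun i => (√b : ℂ) • ψ' i,
    Fin.append φ φ', ?_⟩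
  simp only [Fin.sum_univ_add, Fin.append_left, Fin.append_right, Finset.smul_sum,
    smul_proj_tens ha, smul_proj_tens hb]

theorem IsSepState.isSumProjTens {ρ : Matrix (Fin m₁ × Fin m₂) (Fin m₁ × Fin m₂) ℂ}
    (hρ : IsSepState ρ) : IsSumProjTens ρ := by
  have hhull : convexHull ℝ (boundedProductProjs m₁ m₂) ⊆ {ρ | IsSumProjTens ρ} :=
    convexHull_min (fun _ ⟨v, _, hv⟩ => ⟨1, fun _ => v.1, fun _ => v.2, by simp [← hv]⟩)
      convex_isSumProjTens
  refine hhull (isCompact_boundedProductProjs.convexHull.isClosed.closure_subset_iff.2 ?_ hρ)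
  exact convexHull_min (fun _ ⟨A, B, hA, hB, hσ⟩ => hσ ▸ hA.kronecker_mem_convexHull hB)
    (convex_convexHull ℝ _)

end SumProjTens

theorem separable_range_criterion_general {m₁ m₂ : ℕ}
    (ρ : Matrix (Fin m₁ × Fin m₂) (Fin m₁ × Fin m₂) ℂ)
    (hsep : IsSepState ρ) :
    ∃ (N : ℕ) (ψ : Fin N → Fin m₁ → ℂ) (φ : Fin N → Fin m₂ → ℂ),
      Submodule.span ℂ (Set.range fun i => tens (ψ i) (φ i)) =
        LinearMap.range ρ.mulVecLin ∧
      Submodule.span ℂ (Set.range fun i => tens (ψ i) (fun j => star (φ i j))) =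
        LinearMap.range (pt₂ ρ).mulVecLin ∧
      (∀ i, ∃ w, ρ.mulVec w = tens (ψ i) (φ i)) ∧
      (∀ i, ∃ w, (pt₂ ρ).mulVec w = tens (ψ i) (fun j => star (φ i j))) := by
  obtain ⟨N, ψ, φ, rfl⟩ := hsep.isSumProjTens
  have hrange := range_mulVecLin_sum_proj fun i => tens (ψ i) (φ i)
  have hrange_pt₂ := range_mulVecLin_sum_proj fun i => tens (ψ i) fun j => star (φ i j)
  rw [← pt₂_sum_proj_tens] at hrange_pt₂
  exact ⟨N, ψ, φ, hrange.symm, hrange_pt₂.symm,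
    fun i => hrange.ge (Submodule.subset_span ⟨i, rfl⟩),
    fun i => hrange_pt₂.ge (Submodule.subset_span ⟨i, rfl⟩)⟩

/-- **range criterion.** For a separable state `ρ` there is a
finite family of product vectors `ψ_i ⊗ φ_i` spanning the range of `ρ` whose
partial conjugates `ψ_i ⊗ φ_i*` span the range of `ρ^{T₂}`; in particular each
`ψ_i ⊗ φ_i` lies in the range of `ρ` and each `ψ_i ⊗ φ_i*` lies in the range
of `ρ^{T₂}`. -/
theorem separable_range_criterion {m₁ m₂ : ℕ}
    (ρ : Matrix (Fin m₁ × Fin m₂) (Fin m₁ × Fin m₂) ℂ)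
    (hρ : IsState ρ) (hsep : IsSepState ρ) :
    ∃ (N : ℕ) (ψ : Fin N → Fin m₁ → ℂ) (φ : Fin N → Fin m₂ → ℂ),
      Submodule.span ℂ (Set.range fun i => tens (ψ i) (φ i)) =
        LinearMap.range ρ.mulVecLin ∧
      Submodule.span ℂ (Set.range fun i => tens (ψ i) (fun j => star (φ i j))) =
        LinearMap.range (pt₂ ρ).mulVecLin ∧
      (∀ i, ∃ w, ρ.mulVec w = tens (ψ i) (φ i)) ∧
      (∀ i, ∃ w, (pt₂ ρ).mulVec w = tens (ψ i) (fun j => star (φ i j))) :=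
  separable_range_criterion_general ρ hsep
end
end

section
/- The partial transposition σ_insep^{T₂} of the state σ_insep on ℂ² ⊗ ℂ⁴ is not positive semidefinite; consequently σ_insep is not separable. -/
open scoped ComplexOrder
open Matrix Kronecker

noncomputable section

/-- Standard basis vectors of `ℂ^n`. -/
def e (n : ℕ) (i : Fin n) : Fin n → ℂ := fun j => if j = i then 1 else 0

/-- The vectors `Ψ_i = (e₁⊗e_i + e₂⊗e_{i+1})/√2`, `i = 1, 2, 3`. -/
def Ψ24 (i : Fin 3) : Fin 2 × Fin 4 → ℂ :=
  (Real.sqrt 2 : ℂ)⁻¹ • (tens (e 2 0) (e 4 i.castSucc) + tens (e 2 1) (e 4 i.succ))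

/-- The inseparable state `σ_insep = (2/7) Σ_i P_{Ψ_i} + (1/7) P_{e₁⊗e₄}`. -/
def σinsep : Matrix (Fin 2 × Fin 4) (Fin 2 × Fin 4) ℂ :=
  (2 / 7 : ℂ) • ∑ i : Fin 3, proj (Ψ24 i) +
    (1 / 7 : ℂ) • proj (tens (e 2 0) (e 4 3))

/-- The product vector `Φ_b = e₂ ⊗ (√((1+b)/2) e₁ + √((1−b)/2) e₃)`. -/
def Φb (b : ℝ) : Fin 2 × Fin 4 → ℂ :=
  tens (e 2 1) (fun j =>
    if j = 0 then (Real.sqrt ((1 + b) / 2) : ℂ)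
    else if j = 2 then (Real.sqrt ((1 - b) / 2) : ℂ) else 0)

/-- The Horodecki state `σ_b = (7b/(7b+1)) σ_insep + (1/(7b+1)) P_{Φ_b}`. -/
def σB (b : ℝ) : Matrix (Fin 2 × Fin 4) (Fin 2 × Fin 4) ℂ :=
  ((7 * b / (7 * b + 1) : ℝ) : ℂ) • σinsep +
    ((1 / (7 * b + 1) : ℝ) : ℂ) • proj (Φb b)

/-!
A separable state has a positive semidefinite partial transpose (the Peres criterion): the
partial transpose of a product `A ⊗ B` of states is `A ⊗ Bᵀ`, and the positive semidefinite
matrices form a closed convex cone.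

For `σ_insep` the criterion fails because of two entries of `σ_insep^{T₂}`. Its diagonal entry
at `e₂ ⊗ e₁` vanishes, since none of the vectors `Ψ_i`, `e₁ ⊗ e₄` has an `e₂ ⊗ e₁` component,
whereas its entry at `(e₁ ⊗ e₂, e₂ ⊗ e₁)` is `σ_insep[(e₁ ⊗ e₁, e₂ ⊗ e₂)] = 1/7`, coming from
`P_{Ψ_1}`. A positive semidefinite matrix with a zero diagonal entry has a zero column there.
-/

section PosSemidef

variable {n 𝕜 : Type*} [Fintype n] [RCLike 𝕜]

theorem Matrix.isClosed_setOf_posSemidef : IsClosed {A : Matrix n n 𝕜 | A.PosSemidef} := by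
  have hset : {A : Matrix n n 𝕜 | A.PosSemidef} =
      {A | Aᴴ = A} ∩ ⋂ x : n → 𝕜, {A | 0 ≤ star x ⬝ᵥ A *ᵥ x} := by
    ext A
    simp only [Set.mem_ofPred_eq, Set.mem_inter_iff, Set.mem_iInter,
      posSemidef_iff_dotProduct_mulVec, IsHermitian]
  rw [hset]
  refine (isClosed_eq continuous_id.matrix_conjTranspose continuous_id).inter
    (isClosed_iInter fun x => isClosed_le continuous_const ?_)
  exact continuous_const.dotProduct (continuous_id.matrix_mulVec continuous_const)

theorem Matrix.PosSemidef.apply_eq_zero_of_diag_eq_zero [DecidableEq n] {A : Matrix n n 𝕜}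
    (hA : A.PosSemidef) {i : n} (hi : A i i = 0) (j : n) : A j i = 0 := by
  have hcol : A *ᵥ Pi.single i 1 = 0 :=
    (hA.dotProduct_mulVec_zero_iff _).mp (by simpa [mulVec_single] using hi)
  simpa [mulVec_single] using congr_fun hcol j

end PosSemidef

section PartialTranspose

variable {m₁ m₂ : ℕ}

theorem pt₂_kronecker (A : Matrix (Fin m₁) (Fin m₁) ℂ) (B : Matrix (Fin m₂) (Fin m₂) ℂ) :
    pt₂ (A ⊗ₖ B) = A ⊗ₖ Bᵀ := by
  ext p q
  simp [pt₂, kroneckerMap_apply]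

theorem continuous_pt₂ : Continuous (pt₂ (m₁ := m₁) (m₂ := m₂)) :=
  continuous_pi fun _ => continuous_pi fun _ => (continuous_apply _).comp (continuous_apply _)

theorem isClosed_setOf_pt₂_posSemidef :
    IsClosed {ρ : Matrix (Fin m₁ × Fin m₂) (Fin m₁ × Fin m₂) ℂ | (pt₂ ρ).PosSemidef} :=
  isClosed_setOf_posSemidef.preimage continuous_pt₂

theorem convex_setOf_pt₂_posSemidef :
    Convex ℝ {ρ : Matrix (Fin m₁ × Fin m₂) (Fin m₁ × Fin m₂) ℂ | (pt₂ ρ).PosSemidef} :=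
  fun _ hρ _ hσ _ _ ha hb _ => (hρ.smul ha).add (hσ.smul hb)

theorem IsSepState.pt₂_posSemidef {ρ : Matrix (Fin m₁ × Fin m₂) (Fin m₁ × Fin m₂) ℂ}
    (hρ : IsSepState ρ) : (pt₂ ρ).PosSemidef := by
  refine closure_minimal (convexHull_min ?_ convex_setOf_pt₂_posSemidef)
    isClosed_setOf_pt₂_posSemidef hρ
  rintro _ ⟨A, B, hA, hB, rfl⟩
  rw [Set.mem_ofPred_eq, pt₂_kronecker]
  exact hA.1.kronecker hB.1.transpose

end PartialTranspose

theorem pt₂_σinsep_apply_one_zero_one_zero : pt₂ σinsep (1, 0) (1, 0) = 0 := by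
  simp [pt₂, σinsep, proj, Ψ24, tens, e, Fin.sum_univ_three]

theorem pt₂_σinsep_apply_zero_one_one_zero : pt₂ σinsep (0, 1) (1, 0) = 1 / 7 := by
  have hsqrt : ((√2 : ℝ) : ℂ) * (√2 : ℝ) = 2 := by
    exact_mod_cast Real.mul_self_sqrt zero_le_two
  norm_num [pt₂, σinsep, proj, Ψ24, tens, e, Fin.sum_univ_three, Fin.ext_iff, ← mul_inv, hsqrt]

/-- The partial transposition of `σ_insep` is not positive
semidefinite; consequently `σ_insep` is not separable. -/
theorem σinsep_pt₂_not_posSemidef :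
    ¬ (pt₂ σinsep).PosSemidef ∧ ¬ IsSepState σinsep := by
  have hnot : ¬ (pt₂ σinsep).PosSemidef := fun h => by
    simpa [pt₂_σinsep_apply_zero_one_one_zero] using
      h.apply_eq_zero_of_diag_eq_zero pt₂_σinsep_apply_one_zero_one_zero (0, 1)
  exact ⟨hnot, fun hsep => hnot hsep.pt₂_posSemidef⟩
end
end
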